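/- For every γ ∈ (0,1) and every step size s > 0, there exists t₀ > 3γ√s (depending only on γ and s) such that along any solution X of the high-resolution differential equation, the continuous Lyapunov function E satisfies, for all t ≥ t₀, dE(t)/dt ≤ − √s · t^γ (t^γ − γ√s t^{γ−1}) · ‖∇f(X(t) + √s Ẋ(t))‖²; in particular E is nonincreasing on [t₀, ∞). -/

import Mathlib

/-!
Divide out the weight: `E(t) = t^{2(γ-1)} Ê(t)`, where `Ê` is `E` with `t^γ` replaced by `t`
and `t^{γ-1}` by `1`. Differentiating `t^{2(γ-1)} Ê` along the ODE, the terms in `‖Ẋ‖²` and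
`⟪X - x⋆, Ẋ⟫` cancel, and what is left is linear in `f(Y) - f(x⋆)`, `⟪∇f(Y), Y - x⋆⟫`,
`‖∇f(Y)‖²` and `‖X - x⋆‖²`, where `Y = X + √s Ẋ`. Convexity gives
`f(Y) - f(x⋆) ≤ ⟪∇f(Y), Y - x⋆⟫`, and after that every remaining coefficient is signed by a
cubic inequality in `t` and `c = γ√s` that holds for all `t > 3c`. So any `t₀ > 3γ√s` works.
-/

open Set Filter Topology

/-- The continuous Lyapunov function for the underdamped high-resolution ODE. -/
noncomputable def lyapCont (γ s : ℝ) {d : ℕ} (f : EuclideanSpace ℝ (Fin d) → ℝ)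
    (xstar : EuclideanSpace ℝ (Fin d)) (X V : ℝ → EuclideanSpace ℝ (Fin d)) (t : ℝ) : ℝ :=
  (t ^ γ * (t ^ γ - 2 * γ * Real.sqrt s * t ^ (γ - 1)) / (t - 3 * γ * Real.sqrt s)) *
      (t + 3 * γ * Real.sqrt s / 2) * (f (X t + Real.sqrt s • V t) - f xstar) +
    (1 / 2) * ‖(t ^ γ) • V t + (2 * γ * t ^ (γ - 1)) • (X t - xstar)‖ ^ 2 +
    γ * (1 - γ) * t ^ (2 * (γ - 1)) * ‖X t - xstar‖ ^ 2

open scoped RealInnerProductSpace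

theorem ConvexOn.hasFDerivAt_apply_sub_le {E : Type*} [NormedAddCommGroup E] [NormedSpace ℝ E]
    {f : E → ℝ} {f' : E →L[ℝ] ℝ} {y : E} (hf : ConvexOn ℝ univ f) (h : HasFDerivAt f f' y)
    (z : E) : f' (z - y) ≤ f z - f y := by
  have hline : ConvexOn ℝ univ (f ∘ AffineMap.lineMap (k := ℝ) y z) := by
    simpa using hf.comp_affineMap (AffineMap.lineMap (k := ℝ) y z)
  have hderiv : HasDerivAt (f ∘ AffineMap.lineMap (k := ℝ) y z) (f' (z - y)) 0 := by
    have hcurve : HasDerivAt (AffineMap.lineMap (k := ℝ) y z : ℝ → E) (z - y) 0 := by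
      simpa using AffineMap.hasDerivAt_lineMap (a := y) (b := z) (x := 0)
    have hy : HasFDerivAt f f' (AffineMap.lineMap (k := ℝ) y z 0) := by simpa using h
    exact hy.comp_hasDerivAt 0 hcurve
  simpa [slope] using hline.le_slope_of_hasDerivAt (mem_univ 0) (mem_univ 1) one_pos hderiv

noncomputable def potentialWeight (c t : ℝ) : ℝ := t * (t - 2 * c) * (t + 3 * c / 2) / (t - 3 * c)

theorem hasDerivAt_potentialWeight {c t : ℝ} (ht : t - 3 * c ≠ 0) :
    HasDerivAt (potentialWeight c)
      ((((t - 2 * c + t) * (t + 3 * c / 2) + t * (t - 2 * c)) * (t - 3 * c)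
        - t * (t - 2 * c) * (t + 3 * c / 2)) / (t - 3 * c) ^ 2) t := by
  have hid := hasDerivAt_id' t
  exact (((hid.mul (hid.sub_const (2 * c))).mul (hid.add_const (3 * c / 2))).div
    (hid.sub_const (3 * c)) ht).congr_deriv (by simp only [Pi.mul_apply]; ring)

theorem deriv_potentialWeight_add_le {γ c t : ℝ} (hγ : γ < 1) (hc : 0 ≤ c) (ht : 3 * c < t) :
    deriv (potentialWeight c) t + 2 * (γ - 1) / t * potentialWeight c t ≤
      2 * γ * (t + 3 * c / 2) := by
  have hD : 0 < t - 3 * c := by linarith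
  have ht0 : 0 < t := by linarith
  rw [(hasDerivAt_potentialWeight hD.ne').deriv, potentialWeight]
  field_simp
  rw [div_le_iff₀ (pow_pos (by linarith) 2)]
  -- times `(t - 3c)²`, the gap is `c ((t - 3c)² + 27 c²) / 2 + c (1 - γ) (2t + 3c) (t - 3c)`
  nlinarith [mul_nonneg hc (sq_nonneg (t - 3 * c)), pow_nonneg hc 3,
    mul_nonneg (mul_nonneg hc (sub_nonneg.2 hγ.le)) (mul_nonneg (by linarith : 0 ≤ 2 * t + 3 * c) hD.le)]

theorem mul_sub_le_potentialWeight_mul_div {c t : ℝ} (hc : 0 ≤ c) (ht : 3 * c < t) :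
    t * (t - c) ≤ potentialWeight c t * (t + 3 * c / 2) / t := by
  have hD : 0 < t - 3 * c := by linarith
  have ht0 : 0 < t := by linarith
  rw [potentialWeight, le_div_iff₀ ht0, div_mul_eq_mul_div, le_div_iff₀ hD]
  nlinarith [mul_nonneg hc (sq_nonneg (t - 3 * c)), mul_nonneg (mul_nonneg hc hc) hD.le,
    pow_nonneg hc 3]

section InnerProductSpace

variable {E : Type*} [NormedAddCommGroup E] [InnerProductSpace ℝ E]

theorem HasGradientAt.comp_hasDerivAt [CompleteSpace E] {f : E → ℝ} {g : E} {c : ℝ → E} {v : E}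
    {t : ℝ} (hf : HasGradientAt f g (c t)) (hc : HasDerivAt c v t) :
    HasDerivAt (fun τ => f (c τ)) ⟪g, v⟫ t :=
  hf.hasFDerivAt.comp_hasDerivAt t hc

theorem ConvexOn.inner_gradient_sub_le [CompleteSpace E] {f : E → ℝ} {g y : E}
    (hf : ConvexOn ℝ univ f) (h : HasGradientAt f g y) (z : E) : ⟪g, z - y⟫ ≤ f z - f y :=
  hf.hasFDerivAt_apply_sub_le h.hasFDerivAt z

/-- `t^{2(1-γ)} lyapCont γ s`, with `b = √s`. -/
noncomputable def reducedLyap (γ b : ℝ) (f : E → ℝ) (xstar : E) (X V : ℝ → E) (t : ℝ) : ℝ :=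
  potentialWeight (γ * b) t * (f (X t + b • V t) - f xstar) +
    (1 / 2) * ‖t • V t + (2 * γ) • (X t - xstar)‖ ^ 2 + γ * (1 - γ) * ‖X t - xstar‖ ^ 2

/-- `t^{2(1-γ)}` times the derivative of `t^{2(γ-1)} reducedLyap` along the ODE, at
`X t = x`, `V t = v` and `∇f(x + b v) = g`. -/
noncomputable def reducedLyapRate (γ b : ℝ) (f : E → ℝ) (g xstar x v : E) (t : ℝ) : ℝ :=
  (deriv (potentialWeight (γ * b)) t + 2 * (γ - 1) / t * potentialWeight (γ * b) t) *
      (f (x + b • v) - f xstar)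
    - 2 * γ * (t + 3 * (γ * b) / 2) * ⟪g, (x - xstar) + b • v⟫
    - b * (potentialWeight (γ * b) t * (t + 3 * (γ * b) / 2) / t) * ‖g‖ ^ 2
    - 2 * γ * (1 - γ ^ 2) / t * ‖x - xstar‖ ^ 2

theorem hasDerivAt_rpow_mul_reducedLyap [CompleteSpace E] {γ b t : ℝ} {f : E → ℝ} {g xstar : E}
    {X V : ℝ → E} (ht : 0 < t) (htc : t - 3 * (γ * b) ≠ 0) (hX : HasDerivAt X (V t) t)
    (hV : HasDerivAt V (-((3 * γ / t) • V t + (1 + 3 * γ * b / (2 * t)) • g)) t)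
    (hg : HasGradientAt f g (X t + b • V t)) :
    HasDerivAt (fun τ => τ ^ (2 * (γ - 1)) * reducedLyap γ b f xstar X V τ)
      (t ^ (2 * (γ - 1)) * reducedLyapRate γ b f g xstar (X t) (V t) t) t := by
  have hφ : HasDerivAt (potentialWeight (γ * b)) (deriv (potentialWeight (γ * b)) t) t :=
    (hasDerivAt_potentialWeight htc).differentiableAt.hasDerivAt
  have hF := hg.comp_hasDerivAt (hX.add (hV.const_smul b))
  have hK := (((hasDerivAt_id' t).smul hV).add ((hX.sub_const xstar).const_smul (2 * γ))).norm_sq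
  have hW := (hX.sub_const xstar).norm_sq
  have hw : HasDerivAt (fun τ : ℝ => τ ^ (2 * (γ - 1))) (2 * (γ - 1) * t ^ (2 * (γ - 1) - 1)) t :=
    Real.hasDerivAt_rpow_const (Or.inl ht.ne')
  refine (hw.mul (((hφ.mul (hF.sub_const (f xstar))).add (hK.const_mul (1 / 2))).add
    (hW.const_mul (γ * (1 - γ))))).congr_deriv ?_
  have hφt : potentialWeight (γ * b) t * (t - 3 * (γ * b)) =
      t * (t - 2 * (γ * b)) * (t + 3 * (γ * b) / 2) := div_mul_cancel₀ _ htc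
  rw [Real.rpow_sub_one ht.ne']
  simp only [reducedLyapRate, Pi.add_apply, Pi.mul_apply, Pi.smul_apply', Pi.smul_apply, one_smul,
    ← real_inner_self_eq_norm_sq, inner_add_left, inner_add_right, inner_neg_right,
    real_inner_smul_left, real_inner_smul_right]
  set W := X t - xstar
  simp only [real_inner_comm (V t) W, real_inner_comm (V t) g, real_inner_comm W g]
  field_simp
  -- the `⟪V t, g⟫` terms cancel thanks to `hφt`
  linear_combination 2 * ⟪V t, g⟫ * hφt

theorem reducedLyapRate_le [CompleteSpace E] {γ b t : ℝ} {f : E → ℝ} {g xstar x v : E}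
    (hγ : γ ∈ Ioo 0 1) (hb : 0 ≤ b) (ht : 3 * (γ * b) < t) (hf : ConvexOn ℝ univ f)
    (hg : HasGradientAt f g (x + b • v)) (hmin : f xstar ≤ f (x + b • v)) :
    reducedLyapRate γ b f g xstar x v t ≤ -(b * (t * (t - γ * b)) * ‖g‖ ^ 2) := by
  obtain ⟨hγ0, hγ1⟩ := hγ
  have hc : 0 ≤ γ * b := mul_nonneg hγ0.le hb
  have ht0 : 0 < t := by linarith
  have hgap : f (x + b • v) - f xstar ≤ ⟪g, (x - xstar) + b • v⟫ := by
    have h := hf.inner_gradient_sub_le hg xstar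
    rw [show xstar - (x + b • v) = -((x - xstar) + b • v) by abel, inner_neg_right] at h
    linarith
  have hφ := mul_le_mul_of_nonneg_right (deriv_potentialWeight_add_le hγ1 hc ht)
    (sub_nonneg.2 hmin)
  have hcross := mul_le_mul_of_nonneg_left hgap
    (by positivity : 0 ≤ 2 * γ * (t + 3 * (γ * b) / 2))
  have hgrad : b * (t * (t - γ * b)) * ‖g‖ ^ 2 ≤
      b * (potentialWeight (γ * b) t * (t + 3 * (γ * b) / 2) / t) * ‖g‖ ^ 2 := by
    gcongr
    exact mul_sub_le_potentialWeight_mul_div hc ht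
  have hdist : 0 ≤ 2 * γ * (1 - γ ^ 2) / t * ‖x - xstar‖ ^ 2 := by
    have : 0 ≤ 1 - γ ^ 2 := by nlinarith
    positivity
  rw [reducedLyapRate]
  linarith

end InnerProductSpace

theorem rpow_mul_rpow_sub_mul_rpow {γ c t : ℝ} (ht : 0 < t) :
    t ^ γ * (t ^ γ - c * t ^ (γ - 1)) = t ^ (2 * (γ - 1)) * (t * (t - c)) := by
  have hγ : t ^ γ = t ^ (γ - 1) * t := by rw [← Real.rpow_add_one ht.ne', sub_add_cancel]
  rw [show 2 * (γ - 1) = (γ - 1) + (γ - 1) by ring, Real.rpow_add ht, hγ]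
  ring

theorem lyapCont_eq_rpow_mul_reducedLyap {γ s t : ℝ} {d : ℕ} {f : EuclideanSpace ℝ (Fin d) → ℝ}
    {xstar : EuclideanSpace ℝ (Fin d)} {X V : ℝ → EuclideanSpace ℝ (Fin d)} (ht : 0 < t) :
    lyapCont γ s f xstar X V t = t ^ (2 * (γ - 1)) * reducedLyap γ (√s) f xstar X V t := by
  have hγ : t ^ γ = t ^ (γ - 1) * t := by rw [← Real.rpow_add_one ht.ne', sub_add_cancel]
  have hsq : t ^ (2 * (γ - 1)) = (t ^ (γ - 1)) ^ 2 := by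
    rw [show 2 * (γ - 1) = (γ - 1) + (γ - 1) by ring, Real.rpow_add ht, sq]
  have hvec : t ^ γ • V t + (2 * γ * t ^ (γ - 1)) • (X t - xstar) =
      t ^ (γ - 1) • (t • V t + (2 * γ) • (X t - xstar)) := by
    rw [hγ]; module
  rw [lyapCont, reducedLyap, potentialWeight, hvec, norm_smul, Real.norm_of_nonneg (by positivity),
    hsq, hγ]
  ring

theorem exists_hasDerivAt_lyapCont_le {γ s t : ℝ} {d : ℕ} {f : EuclideanSpace ℝ (Fin d) → ℝ}
    {g xstar : EuclideanSpace ℝ (Fin d)} {X V : ℝ → EuclideanSpace ℝ (Fin d)}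
    (hγ : γ ∈ Ioo 0 1) (ht : 3 * γ * √s < t) (hf : ConvexOn ℝ univ f)
    (hg : HasGradientAt f g (X t + √s • V t)) (hmin : f xstar ≤ f (X t + √s • V t))
    (hX : HasDerivAt X (V t) t)
    (hV : HasDerivAt V (-((3 * γ / t) • V t + (1 + 3 * γ * √s / (2 * t)) • g)) t) :
    ∃ E', HasDerivAt (lyapCont γ s f xstar X V) E' t ∧
      E' ≤ -(√s * (t ^ γ * (t ^ γ - γ * √s * t ^ (γ - 1))) * ‖g‖ ^ 2) := by
  have hc : 0 ≤ γ * √s := mul_nonneg hγ.1.le (Real.sqrt_nonneg s)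
  have ht0 : 0 < t := by linarith
  have hlyap : (fun τ => τ ^ (2 * (γ - 1)) * reducedLyap γ (√s) f xstar X V τ)
      =ᶠ[𝓝 t] lyapCont γ s f xstar X V :=
    eventually_of_mem (Ioi_mem_nhds ht0) fun τ hτ => (lyapCont_eq_rpow_mul_reducedLyap hτ).symm
  refine ⟨_, (hasDerivAt_rpow_mul_reducedLyap ht0 (by linarith) hX hV hg).congr_of_eventuallyEq
    hlyap.symm, ?_⟩
  calc t ^ (2 * (γ - 1)) * reducedLyapRate γ (√s) f g xstar (X t) (V t) t
      ≤ t ^ (2 * (γ - 1)) * -(√s * (t * (t - γ * √s)) * ‖g‖ ^ 2) := by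
        gcongr
        exact reducedLyapRate_le hγ (Real.sqrt_nonneg s) (by linarith) hf hg hmin
    _ = -(√s * (t ^ γ * (t ^ γ - γ * √s * t ^ (γ - 1))) * ‖g‖ ^ 2) := by
        rw [rpow_mul_rpow_sub_mul_rpow ht0]; ring

theorem antitoneOn_Ici_of_hasDerivAt_nonpos {F : ℝ → ℝ} {a : ℝ}
    (h : ∀ t, a ≤ t → ∃ F', HasDerivAt F F' t ∧ F' ≤ 0) : AntitoneOn F (Ici a) := by
  choose F' hF' hF'_nonpos using h
  refine antitoneOn_of_deriv_nonpos (convex_Ici a)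
    (fun t ht => (hF' t ht).continuousAt.continuousWithinAt) ?_ ?_ <;> rw [interior_Ici]
  · exact fun t ht => (hF' t ht.le).differentiableAt.differentiableWithinAt
  · intro t ht
    rw [(hF' t ht.le).deriv]
    exact hF'_nonpos t _

theorem underdamped_continuous_lyapunov_decay
    (γ s : ℝ) (hγ : γ ∈ Set.Ioo (0 : ℝ) 1) :
    ∃ t₀ : ℝ, 3 * γ * Real.sqrt s < t₀ ∧
      ∀ (d : ℕ) (L : ℝ) (f : EuclideanSpace ℝ (Fin d) → ℝ)
        (f' : EuclideanSpace ℝ (Fin d) → EuclideanSpace ℝ (Fin d))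
        (xstar : EuclideanSpace ℝ (Fin d))
        (X V : ℝ → EuclideanSpace ℝ (Fin d)),
        0 < L →
        ConvexOn ℝ Set.univ f →
        (∀ z, HasGradientAt f (f' z) z) →
        (∀ z w, ‖f' z - f' w‖ ≤ L * ‖z - w‖) →
        (∀ z, f xstar ≤ f z) →
        (∀ t ∈ Set.Ioi (0 : ℝ), HasDerivAt X (V t) t) →
        (∀ t ∈ Set.Ioi (0 : ℝ), HasDerivAt V
          (-((3 * γ / t) • V t +
              (1 + 3 * γ * Real.sqrt s / (2 * t)) • f' (X t + Real.sqrt s • V t))) t) →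
        (∀ t : ℝ, t₀ ≤ t →
          ∃ E' : ℝ, HasDerivAt (lyapCont γ s f xstar X V) E' t ∧
            E' ≤ -(Real.sqrt s * (t ^ γ * (t ^ γ - γ * Real.sqrt s * t ^ (γ - 1))) *
              ‖f' (X t + Real.sqrt s • V t)‖ ^ 2)) ∧
        AntitoneOn (lyapCont γ s f xstar X V) (Set.Ici t₀) := by
  have hc : 0 ≤ γ * √s := mul_nonneg hγ.1.le (Real.sqrt_nonneg s)
  refine ⟨3 * γ * √s + 1, by linarith, ?_⟩
  intro d L f f' xstar X V _ hf hgrad _ hmin hX hV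
  have hdecay : ∀ t, 3 * γ * √s + 1 ≤ t → ∃ E', HasDerivAt (lyapCont γ s f xstar X V) E' t ∧
      E' ≤ -(√s * (t ^ γ * (t ^ γ - γ * √s * t ^ (γ - 1))) * ‖f' (X t + √s • V t)‖ ^ 2) :=
    fun t ht => exists_hasDerivAt_lyapCont_le hγ (by linarith) hf (hgrad _) (hmin _)
      (hX t (mem_Ioi.2 (by linarith))) (hV t (mem_Ioi.2 (by linarith)))
  refine ⟨hdecay, antitoneOn_Ici_of_hasDerivAt_nonpos fun t ht => ?_⟩
  obtain ⟨E', hE', hle⟩ := hdecay t ht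
  have ht0 : 0 < t := by linarith
  have htc : 0 ≤ t - γ * √s := by linarith
  refine ⟨E', hE', hle.trans (neg_nonpos.2 ?_)⟩
  rw [rpow_mul_rpow_sub_mul_rpow ht0]
  positivity
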